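/- arXiv:2207.07807 — 3 statements merged into one kernel-verified Lean document; each statement's English description precedes it below -/
import Mathlib

section
/- Let $A = \bigoplus_{i \ge 0} A_i$ be a noetherian graded ring generated as an $A_0$-algebra by elements of degree 1 (homogeneous), and let $M = \bigoplus_{i \in \mathbb{Z}} M_i$ be a finitely generated graded $A$-module. Then there exists an integer $k$ such that $\operatorname{Ann}_{A_0}(M_t) = \operatorname{Ann}_{A_0}(M_k)$ for all integers $t \ge k$. -/
/-!
Since `M` is finitely generated and the sum of its graded pieces, it is generated over `A` by
`⨁_{j ≤ d} M_j` for some `d`. Decomposing `M_{t+1}` along these generators and using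
`A_{i+1} = A_1 A_i` gives `M_{t+1} = A_1 M_t` for `t ≥ d`, so `Ann_{A₀}(M_t) ⊆ Ann_{A₀}(M_{t+1})`
from degree `d` on. This ascending chain of ideals of the noetherian ring `A₀` stabilizes.
-/

open RingTheory.Sequence

/-- The dimension of a module `M` over `R`: the Krull dimension of `R ⧸ Ann_R(M)`. -/
noncomputable def moduleDim (R M : Type*) [CommRing R] [AddCommGroup M] [Module R M] :
    WithBot ℕ∞ :=
  ringKrullDim (R ⧸ Module.annihilator R M)

open Classical in
/-- The depth of a module `M` over a local ring `R`: `⊤` if `M = 0`, otherwise the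
supremum of lengths of `M`-regular sequences contained in the maximal ideal. -/
noncomputable def moduleDepth (R M : Type*) [CommRing R] [IsLocalRing R]
    [AddCommGroup M] [Module R M] : ℕ∞ :=
  if Subsingleton M then ⊤
  else sSup {n : ℕ∞ | ∃ rs : List R, (rs.length : ℕ∞) = n ∧
    (∀ x ∈ rs, x ∈ IsLocalRing.maximalIdeal R) ∧ RingTheory.Sequence.IsRegular M rs}

open Classical in
/-- The codepth of a module over a local ring: `⊥` if `M = 0`, else `dim M - depth M`. -/
noncomputable def moduleCodepth (R M : Type*) [CommRing R] [IsLocalRing R]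
    [AddCommGroup M] [Module R M] : WithBot ℕ∞ :=
  if Subsingleton M then ⊥
  else ((WithBot.unbotD 0 (moduleDim R M) - moduleDepth R M : ℕ∞) : WithBot ℕ∞)

/-- A localized module `M_𝔭` is Cohen–Macaulay over `R_𝔭`. -/
noncomputable def isCMAt (R M : Type*) [CommRing R] [AddCommGroup M] [Module R M]
    (𝔭 : Ideal R) [𝔭.IsPrime] : Prop :=
  moduleDim (Localization.AtPrime 𝔭) (LocalizedModule 𝔭.primeCompl M)
    ≤ (moduleDepth (Localization.AtPrime 𝔭) (LocalizedModule 𝔭.primeCompl M) : WithBot ℕ∞)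

/-- The Cohen–Macaulay locus of a ring `R`. -/
noncomputable def cmRingLocus (R : Type*) [CommRing R] : Set (PrimeSpectrum R) :=
  {𝔭 | moduleDim (Localization.AtPrime 𝔭.asIdeal) (Localization.AtPrime 𝔭.asIdeal)
    ≤ (moduleDepth (Localization.AtPrime 𝔭.asIdeal) (Localization.AtPrime 𝔭.asIdeal) :
        WithBot ℕ∞)}

/-- The `n`-th codepth locus of a module. -/
noncomputable def codepthLocus (R M : Type*) [CommRing R] [AddCommGroup M] [Module R M]
    (n : ℕ) : Set (PrimeSpectrum R) :=
  {𝔭 | moduleCodepth (Localization.AtPrime 𝔭.asIdeal)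
        (LocalizedModule 𝔭.asIdeal.primeCompl M) ≤ (n : ℕ∞)}

/-- A ring is catenary if any two saturated chains of primes with the same endpoints
have the same length. -/
def IsCatenary (R : Type*) [CommRing R] : Prop :=
  ∀ c₁ c₂ : RelSeries {(a, b) : PrimeSpectrum R × PrimeSpectrum R | a ⋖ b},
    c₁.head = c₂.head → c₁.last = c₂.last → c₁.length = c₂.length

open Classical in
/-- The grade of an ideal `J` on a module `M`. -/
noncomputable def moduleGrade {R : Type*} (M : Type*) [CommRing R] [AddCommGroup M]
    [Module R M] (J : Ideal R) : ℕ∞ :=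
  if J • (⊤ : Submodule R M) = ⊤ then ⊤
  else sSup {n : ℕ∞ | ∃ rs : List R, (rs.length : ℕ∞) = n ∧
    (∀ x ∈ rs, x ∈ J) ∧ RingTheory.Sequence.IsWeaklyRegular M rs}

/-- The Cohen–Macaulay locus of a module `M` over `R`. -/
noncomputable def cmLocus (R M : Type*) [CommRing R] [AddCommGroup M] [Module R M] :
    Set (PrimeSpectrum R) :=
  {𝔭 | moduleDim (Localization.AtPrime 𝔭.asIdeal) (LocalizedModule 𝔭.asIdeal.primeCompl M)
    ≤ (moduleDepth (Localization.AtPrime 𝔭.asIdeal)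
        (LocalizedModule 𝔭.asIdeal.primeCompl M) : WithBot ℕ∞)}

open Submodule DirectSum Pointwise

theorem DirectSum.decompose_mem_span_inter {R M ι : Type*} [DecidableEq ι] [Semiring R]
    [AddCommMonoid M] [Module R M] (ℳ : ι → Submodule R M) [Decomposition ℳ] {G : Set M}
    (hG : ∀ g ∈ G, ∃ i, g ∈ ℳ i) {x : M} (hx : x ∈ span R G) (n : ι) :
    (decompose ℳ x n : M) ∈ span R (G ∩ ℳ n) := by
  induction hx using span_induction with
  | mem g hg =>
    obtain ⟨i, hgi⟩ := hG g hg
    by_cases hin : i = n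
    · subst hin
      rw [decompose_of_mem_same ℳ hgi]
      exact subset_span ⟨hg, hgi⟩
    · rw [decompose_of_mem_ne ℳ hgi hin]
      exact zero_mem _
  | zero => simp
  | add x y _ _ hx hy =>
    rw [decompose_add, add_apply, coe_add]
    exact add_mem hx hy
  | smul r x _ hx =>
    rw [decompose_smul, smul_apply, coe_smul]
    exact smul_mem _ r hx

theorem Submodule.annihilator_le_annihilator_span_smul {R A M : Type*} [CommSemiring R]
    [Semiring A] [Algebra R A] [AddCommMonoid M] [Module R M] [Module A M] [IsScalarTower R A M]
    (s : Set A) (N : Submodule R M) :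
    N.annihilator ≤ (span R (s • (N : Set M))).annihilator := by
  intro r hr
  rw [mem_annihilator_span]
  rintro ⟨_, a, -, y, hy, rfl⟩
  rw [smul_comm, mem_annihilator.mp hr y hy, smul_zero]

theorem exists_forall_ge_eq_of_le_succ {α : Type*} [PartialOrder α] [WellFoundedGT α]
    (f : ℤ → α) {d : ℤ} (hf : ∀ t, d ≤ t → f t ≤ f (t + 1)) :
    ∃ k, ∀ t, k ≤ t → f t = f k := by
  let g : ℕ →o α := ⟨fun n ↦ f (d + n), monotone_nat_of_le_succ fun n ↦ by
    simpa [add_assoc] using hf (d + n) (by omega)⟩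
  obtain ⟨n, hn⟩ := WellFoundedGT.monotone_chain_condition g
  refine ⟨d + n, fun t ht ↦ ?_⟩
  obtain ⟨m, rfl⟩ : ∃ m : ℕ, t = d + m := ⟨(t - d).toNat, by omega⟩
  exact (hn m (by omega)).symm

section Graded

variable {A₀ A M : Type*} [CommSemiring A₀] [Semiring A] [Algebra A₀ A] [AddCommMonoid M]
  [Module A₀ M] [Module A M]
  (𝒜 : ℕ → Submodule A₀ A) (ℳ : ℤ → Submodule A₀ M)

theorem exists_span_iUnion_le_eq_top [IsScalarTower A₀ A M] [Module.Finite A M]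
    (hM : iSup ℳ = ⊤) :
    ∃ d : ℤ, span A (⋃ j ≤ d, (ℳ j : Set M)) = ⊤ := by
  have hcompact : IsCompactElement (⊤ : Submodule A M) :=
    (fg_iff_compact ⊤).mp Module.Finite.fg_top
  have htop : (⊤ : Submodule A M) ≤ ⨆ j, span A (ℳ j : Set M) := by
    intro x _
    have hx : x ∈ iSup ℳ := hM ▸ mem_top
    refine (iSup_le fun j ↦ ?_ : iSup ℳ ≤ (⨆ j, span A (ℳ j : Set M)).restrictScalars A₀) hx
    exact fun y hy ↦ mem_iSup_of_mem j (subset_span hy)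
  obtain ⟨s, hs⟩ := CompleteLattice.IsCompactElement.exists_finset_of_le_iSup _ hcompact _ htop
  obtain ⟨d, hd⟩ := s.exists_le
  refine ⟨d, top_le_iff.mp (hs.trans (iSup₂_le fun j hj ↦ span_mono ?_))⟩
  exact Set.subset_iUnion₂ (s := fun j (_ : j ≤ d) ↦ (ℳ j : Set M)) j (hd j hj)

theorem smul_mem_span_smul_of_mem_succ
    (hAM : ∀ (i : ℕ) (j : ℤ), ∀ a ∈ 𝒜 i, ∀ m ∈ ℳ j, a • m ∈ ℳ (i + j))
    (hgen : ∀ i, 𝒜 (i + 1) ≤ 𝒜 1 * 𝒜 i) {i : ℕ} {j : ℤ} {a : A} (ha : a ∈ 𝒜 (i + 1)) {y : M}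
    (hy : y ∈ ℳ j) : a • y ∈ span A₀ ((𝒜 1 : Set A) • (ℳ (i + j) : Set M)) := by
  refine Submodule.mul_induction_on (hgen i ha) (fun b hb c hc ↦ ?_) fun a a' ha ha' ↦ ?_
  · rw [mul_smul]
    exact subset_span (Set.smul_mem_smul hb (hAM i j c hc y hy))
  · rw [add_smul]
    exact add_mem ha ha'

theorem le_span_smul_of_span_iUnion_le_eq_top [IsScalarTower A₀ A M] [Decomposition ℳ]
    (hA : iSup 𝒜 = ⊤)
    (hAM : ∀ (i : ℕ) (j : ℤ), ∀ a ∈ 𝒜 i, ∀ m ∈ ℳ j, a • m ∈ ℳ (i + j))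
    (hgen : ∀ i, 𝒜 (i + 1) ≤ 𝒜 1 * 𝒜 i) {d : ℤ} (hd : span A (⋃ j ≤ d, (ℳ j : Set M)) = ⊤)
    {t : ℤ} (ht : d ≤ t) : ℳ (t + 1) ≤ span A₀ ((𝒜 1 : Set A) • (ℳ t : Set M)) := by
  set G := (⋃ i, (𝒜 i : Set A)) • ⋃ j ≤ d, (ℳ j : Set M)
  have hspan : span A₀ G = ⊤ := by
    rw [span_smul_of_span_eq_top (by rw [span_iUnion]; simpa using hA), hd, restrictScalars_top]
  have hG : ∀ g ∈ G, ∃ i, g ∈ ℳ i := by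
    rintro _ ⟨a, ⟨_, ⟨i, rfl⟩, ha⟩, y, hy, rfl⟩
    simp only [Set.mem_iUnion] at hy
    obtain ⟨j, -, hy⟩ := hy
    exact ⟨i + j, hAM i j a ha y hy⟩
  intro m hm
  have := decompose_mem_span_inter ℳ hG (hspan ▸ mem_top : m ∈ span A₀ G) (t + 1)
  rw [decompose_of_mem_same ℳ hm] at this
  refine span_le.mpr ?_ this
  rintro _ ⟨⟨a, ⟨_, ⟨i, rfl⟩, ha⟩, y, hy, rfl⟩, hdeg⟩
  simp only [Set.mem_iUnion] at hy
  obtain ⟨j, hjd, hy⟩ := hy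
  dsimp only at ha hdeg ⊢
  by_cases h0 : a • y = 0
  · rw [h0]; exact zero_mem _
  have hij : (i : ℤ) + j = t + 1 := degree_eq_of_mem_mem ℳ (hAM i j a ha y hy) hdeg h0
  obtain ⟨i, rfl⟩ : ∃ i', i = i' + 1 := Nat.exists_eq_add_one.mpr (by omega)
  have := smul_mem_span_smul_of_mem_succ 𝒜 ℳ hAM hgen ha hy
  rwa [show (i : ℤ) + j = t by push_cast at hij; omega] at this

end Graded

theorem stmt0_general
    (A₀ A M : Type*) [CommRing A₀] [CommRing A] [Algebra A₀ A]
    [IsNoetherianRing A₀]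
    [AddCommGroup M] [Module A₀ M] [Module A M] [IsScalarTower A₀ A M]
    [Module.Finite A M]
    (𝒜 : ℕ → Submodule A₀ A) (ℳ : ℤ → Submodule A₀ M)
    (hA : DirectSum.IsInternal 𝒜)
    (hM : DirectSum.IsInternal ℳ)
    (hAM : ∀ (i : ℕ) (j : ℤ), ∀ a ∈ 𝒜 i, ∀ m ∈ ℳ j, a • m ∈ ℳ (i + j))
    (hhom : ∀ i : ℕ, 𝒜 (i + 1) = 𝒜 1 * 𝒜 i) :
    ∃ k : ℤ, ∀ t : ℤ, k ≤ t →
      Module.annihilator A₀ (ℳ t) = Module.annihilator A₀ (ℳ k) := by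
  let _ := hM.chooseDecomposition
  obtain ⟨d, hd⟩ := exists_span_iUnion_le_eq_top (A := A) ℳ hM.submodule_iSup_eq_top
  refine exists_forall_ge_eq_of_le_succ (d := d) (fun t ↦ Module.annihilator A₀ (ℳ t))
    fun t ht ↦ ?_
  have hsucc : ℳ (t + 1) ≤ span A₀ ((𝒜 1 : Set A) • (ℳ t : Set M)) :=
    le_span_smul_of_span_iUnion_le_eq_top 𝒜 ℳ hA.submodule_iSup_eq_top hAM
      (fun i ↦ (hhom i).le) hd ht
  exact (annihilator_le_annihilator_span_smul _ _).trans (annihilator_mono hsucc)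

theorem stmt0
    (A₀ A M : Type*) [CommRing A₀] [CommRing A] [Algebra A₀ A]
    [IsNoetherianRing A₀] [IsNoetherianRing A]
    [AddCommGroup M] [Module A₀ M] [Module A M] [IsScalarTower A₀ A M]
    [Module.Finite A M]
    (𝒜 : ℕ → Submodule A₀ A) (ℳ : ℤ → Submodule A₀ M)
    (hinj : Function.Injective (algebraMap A₀ A))
    (hA : DirectSum.IsInternal 𝒜) (hA0 : 𝒜 0 = 1)
    (hAmul : ∀ i j : ℕ, 𝒜 i * 𝒜 j ≤ 𝒜 (i + j))
    (hM : DirectSum.IsInternal ℳ)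
    (hAM : ∀ (i : ℕ) (j : ℤ), ∀ a ∈ 𝒜 i, ∀ m ∈ ℳ j, a • m ∈ ℳ (i + j))
    (hhom : ∀ i : ℕ, 𝒜 (i + 1) = 𝒜 1 * 𝒜 i) :
    ∃ k : ℤ, ∀ t : ℤ, k ≤ t →
      Module.annihilator A₀ (ℳ t) = Module.annihilator A₀ (ℳ k) :=
  stmt0_general A₀ A M 𝒜 ℳ hA hM hAM hhom
end

section
/- Let $A = \bigoplus_{i \ge 0} A_i$ be a noetherian graded ring with $(A_0, \mathfrak{m}_0)$ local, and let $M = \bigoplus_{i \in \mathbb{Z}} M_i$ be a finitely generated graded $A$-module. Then $\dim_{A_0}(M) = \sup\{\dim_{A_0}(M_i) \mid i \in \mathbb{Z}\}$, where $\dim_{A_0}(N) = \dim(A_0/\operatorname{Ann}_{A_0}(N))$. -/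
/-!
A prime `p` of `A₀` contains `Ann M` iff it contains `Ann Mᵢ` for some `i`: finitely many
generators of `M` over `A` lie in finitely many `Mᵢ`, and an element of `A₀ ∖ p` killing
those `Mᵢ` kills `M`, because `A₀` acts through `A`. Thus `V(Ann M) = ⋃ᵢ V(Ann Mᵢ)`, and
the Krull dimension of a union of upper sets is the supremum of their Krull dimensions.
-/

open RingTheory.Sequence

open Order PrimeSpectrum

theorem Order.krullDim_iUnion_of_isUpperSet {α ι : Type*} [Preorder α] {T : ι → Set α}
    (hT : ∀ i, IsUpperSet (T i)) :
    krullDim (⋃ i, T i) = ⨆ i, krullDim (T i) := by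
  refine le_antisymm ?_ (iSup_le fun i ↦
    krullDim_le_of_strictMono (Set.inclusion (Set.subset_iUnion T i)) fun _ _ ↦ id)
  rw [krullDim_eq_iSup_coheight]
  refine iSup_le fun a ↦ ?_
  obtain ⟨i, hi⟩ := Set.mem_iUnion.mp a.2
  -- every chain starting at `a` stays inside the upper set `T i`
  calc (coheight a : WithBot ℕ∞)
      ≤ coheight (a : α) :=
        mod_cast coheight_le_coheight_apply_of_strictMono _ (Subtype.strictMono_coe _) a
    _ = krullDim (Set.Ici (a : α)) := coheight_eq_krullDim_Ici _
    _ ≤ krullDim (T i) :=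
        krullDim_le_of_strictMono (Set.inclusion fun _ h ↦ hT i h hi) fun _ _ ↦ id
    _ ≤ ⨆ i, krullDim (T i) := le_iSup (fun i ↦ krullDim (T i)) i

theorem ringKrullDim_quotient_eq_iSup_of_zeroLocus_eq_iUnion {R ι : Type*} [CommRing R]
    {J : Ideal R} {I : ι → Ideal R}
    (h : zeroLocus (J : Set R) = ⋃ i, zeroLocus (I i : Set R)) :
    ringKrullDim (R ⧸ J) = ⨆ i, ringKrullDim (R ⧸ I i) := by
  simp only [ringKrullDim_quotient]
  rw [h]
  exact krullDim_iUnion_of_isUpperSet fun _ _ _ hpq hp ↦ Set.Subset.trans hp hpq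

section annihilator

variable {R M ι : Type*} [CommSemiring R] [AddCommMonoid M] [Module R M]

theorem Module.exists_finset_inf_annihilator_le (A : Type*) [CommSemiring A] [Algebra R A]
    [Module A M] [IsScalarTower R A M] [Module.Finite A M] {N : ι → Submodule R M}
    (hN : ⨆ i, N i = ⊤) :
    ∃ s : Finset ι, s.inf (fun i ↦ (N i).annihilator) ≤ Module.annihilator R M := by
  classical
  obtain ⟨S, hS⟩ := Module.Finite.fg_top (R := A) (M := M)
  choose D hD using fun g : M ↦ Submodule.mem_iSup_iff_exists_finset.mp (hN ▸ Submodule.mem_top)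
  refine ⟨S.biUnion D, fun r hr ↦ ?_⟩
  have hrS : ∀ g ∈ S, r • g = 0 := by
    intro g hg
    have hr' : r ∈ (⨆ i ∈ S.biUnion D, N i).annihilator := by
      simpa only [Submodule.annihilator_iSup, Finset.inf_eq_iInf] using hr
    have hmono : (⨆ i ∈ D g, N i) ≤ ⨆ i ∈ S.biUnion D, N i :=
      biSup_mono fun i hi ↦ Finset.mem_biUnion.mpr ⟨g, hg, hi⟩
    have hg' : g ∈ ⨆ i ∈ S.biUnion D, N i := hmono (hD g)
    exact Submodule.mem_annihilator.mp hr' g hg'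
  -- `r` acts through `algebraMap R A`, so killing the `A`-generators of `M` suffices
  have hrA : algebraMap R A r ∈ (Submodule.span A (S : Set M)).annihilator :=
    (Submodule.mem_annihilator_span _ _).mpr fun g ↦ by rw [algebraMap_smul, hrS g g.2]
  rw [hS, Submodule.annihilator_top] at hrA
  exact Module.mem_annihilator.mpr fun m ↦ by
    rw [← algebraMap_smul A r m, Module.mem_annihilator.mp hrA]

theorem Module.zeroLocus_annihilator_eq_iUnion (A : Type*) [CommSemiring A] [Algebra R A]
    [Module A M] [IsScalarTower R A M] [Module.Finite A M] {N : ι → Submodule R M}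
    (hN : ⨆ i, N i = ⊤) :
    zeroLocus (Module.annihilator R M : Set R) = ⋃ i, zeroLocus ((N i).annihilator : Set R) := by
  refine subset_antisymm (fun p hp ↦ ?_) (Set.iUnion_subset fun i p hp ↦ ?_)
  · obtain ⟨s, hs⟩ := exists_finset_inf_annihilator_le A hN
    obtain ⟨i, -, hi⟩ := (Ideal.IsPrime.inf_le' p.2).mp (hs.trans hp)
    exact Set.mem_iUnion.mpr ⟨i, hi⟩
  · rw [← Submodule.annihilator_top]
    exact (Submodule.annihilator_mono le_top).trans hp

end annihilator

theorem stmt3_general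
    (A₀ A M : Type*) [CommRing A₀] [CommRing A] [Algebra A₀ A]
    [AddCommGroup M] [Module A₀ M] [Module A M] [IsScalarTower A₀ A M]
    [Module.Finite A M]
    (ℳ : ℤ → Submodule A₀ M)
    (hM : DirectSum.IsInternal ℳ) :
    moduleDim A₀ M = ⨆ i : ℤ, moduleDim A₀ (ℳ i) :=
  ringKrullDim_quotient_eq_iSup_of_zeroLocus_eq_iUnion
    (Module.zeroLocus_annihilator_eq_iUnion A hM.submodule_iSup_eq_top)

theorem stmt3
    (A₀ A M : Type*) [CommRing A₀] [CommRing A] [Algebra A₀ A]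
    [IsNoetherianRing A₀] [IsNoetherianRing A]
    [AddCommGroup M] [Module A₀ M] [Module A M] [IsScalarTower A₀ A M]
    [Module.Finite A M]
    (𝒜 : ℕ → Submodule A₀ A) (ℳ : ℤ → Submodule A₀ M)
    (hinj : Function.Injective (algebraMap A₀ A))
    (hA : DirectSum.IsInternal 𝒜) (hA0 : 𝒜 0 = 1)
    (hAmul : ∀ i j : ℕ, 𝒜 i * 𝒜 j ≤ 𝒜 (i + j))
    (hM : DirectSum.IsInternal ℳ)
    (hAM : ∀ (i : ℕ) (j : ℤ), ∀ a ∈ 𝒜 i, ∀ m ∈ ℳ j, a • m ∈ ℳ (i + j))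
    [IsLocalRing A₀] :
    moduleDim A₀ M = ⨆ i : ℤ, moduleDim A₀ (ℳ i) :=
  stmt3_general A₀ A M ℳ hM
end

section
/- Let $A = \bigoplus_{i \ge 0} A_i$ be a noetherian graded ring and $M$ a finitely generated graded $A$-module. A prime ideal $\mathfrak{p}$ of $A_0$ belongs to $\operatorname{Ass}_{A_0}(M)$ if and only if $\operatorname{depth}_{(A_0)_\mathfrak{p}}(M_\mathfrak{p}) = 0$. -/
open RingTheory.Sequence

/-!
If `𝔭 ∈ Ass_{A₀} M`, then `𝔭 (A₀)_𝔭 ∈ Ass M_𝔭`, so every element of the maximal ideal of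
`(A₀)_𝔭` is a zero divisor on `M_𝔭` and no regular sequence can start.

Conversely, let `depth M_𝔭 = 0`. The grading enters only through a graded Nakayama lemma:
if `𝔭 M_𝔭 = M_𝔭`, Cayley–Hamilton gives `u ∈ A` killing `M` with `u ≡ s ^ n (mod 𝔭A)` for
some `s ∉ 𝔭`, and the degree-zero component of `u` is an element of `A₀ ∖ 𝔭` which still
kills `M`, so `M_𝔭 = 0`. (Without the grading this fails: `ℚ` over `ℤ` has depth `0` at
`(p)`.) Hence every `r ∈ 𝔭` is a zero divisor on `M_𝔭`, equivalently on `M / T` with `T` the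
`(A₀ ∖ 𝔭)`-torsion. On the finitely generated `A`-module `M / T` the elements of `A₀ ∖ 𝔭` are
regular, so the zero divisors of `M / T` in `A₀` are exactly `𝔭`, and they lie in the union
of the contractions of the finitely many primes of `Ass_A (M / T)`. By prime avoidance `𝔭` is
one of these contractions, so `𝔭 ∈ Ass_{A₀} (M / T) ⊆ Ass_{A₀} M_𝔭`, and since `𝔭` is finitely
generated this gives `𝔭 ∈ Ass_{A₀} M`.
-/

open IsLocalRing

section Depth

variable {R N : Type*} [CommRing R] [AddCommGroup N] [Module R N]

theorem IsAssociatedPrime.not_isSMulRegular {I : Ideal R} (hI : IsAssociatedPrime I N) {r : R}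
    (hr : r ∈ I) : ¬IsSMulRegular N r := by
  obtain ⟨hprime, x, rfl⟩ := hI
  obtain ⟨n, hn⟩ := Ideal.mem_radical_iff.mp hr
  rw [Submodule.mem_colon_singleton, Submodule.mem_bot] at hn
  intro hreg
  have hx : x = 0 := (hreg.pow n).right_eq_zero_of_smul hn
  exact hprime.ne_top (by simp [hx])

variable [IsLocalRing R]

theorem moduleDepth_eq_zero_of_maximalIdeal_mem_associatedPrimes
    (h : maximalIdeal R ∈ associatedPrimes R N) : moduleDepth R N = 0 := by
  have hN : ¬Subsingleton N := fun _ ↦ not_isAssociatedPrime_of_subsingleton h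
  rw [moduleDepth, if_neg hN]
  refine sSup_eq_bot.mpr ?_
  rintro _ ⟨_ | ⟨r, rs⟩, rfl, hmem, hreg⟩
  · rfl
  · exact absurd ((isRegular_cons_iff N r rs).mp hreg).1
      (h.not_isSMulRegular (hmem r List.mem_cons_self))

theorem nontrivial_of_moduleDepth_eq_zero (h : moduleDepth R N = 0) : Nontrivial N := by
  by_contra hN
  rw [moduleDepth, if_pos (not_nontrivial_iff_subsingleton.mp hN)] at h
  exact ENat.top_ne_zero h

theorem not_isSMulRegular_of_moduleDepth_eq_zero (h : moduleDepth R N = 0)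
    (hm : maximalIdeal R • (⊤ : Submodule R N) ≠ ⊤) {r : R} (hr : r ∈ maximalIdeal R) :
    ¬IsSMulRegular N r := by
  intro hreg
  have hN := nontrivial_of_moduleDepth_eq_zero h
  rw [moduleDepth, if_neg (not_subsingleton N)] at h
  have hrs : IsRegular N [r] := by
    refine ⟨(isWeaklyRegular_singleton_iff N r).mpr hreg, fun htop ↦ hm ?_⟩
    rw [Ideal.ofList_singleton] at htop
    exact top_le_iff.mp (htop.le.trans (Submodule.smul_mono_left
      ((Ideal.span_singleton_le_iff_mem _).mpr hr)))
  have : ((1 : ℕ) : ℕ∞) ≤ 0 := h ▸ le_sSup ⟨[r], rfl, by simpa using hr, hrs⟩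
  exact absurd this (by norm_num)

end Depth

section Localization

variable {R M : Type*} [CommRing R] [AddCommGroup M] [Module R M] (𝔭 : Ideal R) [𝔭.IsPrime]

open Module.associatedPrimes in
theorem mem_associatedPrimes_localizedModule_atPrime_iff [IsNoetherianRing R] :
    𝔭 ∈ associatedPrimes R (LocalizedModule 𝔭.primeCompl M) ↔ 𝔭 ∈ associatedPrimes R M := by
  -- Both sides say `𝔭 R_𝔭 ∈ Ass M_𝔭`, as `M_𝔭` is the localization of `M` and of itself.
  have := isLocalizedModule_id 𝔭.primeCompl (LocalizedModule 𝔭.primeCompl M)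
    (Localization.AtPrime 𝔭)
  have h := Set.ext_iff.mp
    ((preimage_comap_associatedPrimes_eq_associatedPrimes_of_isLocalizedModule 𝔭.primeCompl
      (Localization.AtPrime 𝔭) LinearMap.id).trans
    (preimage_comap_associatedPrimes_eq_associatedPrimes_of_isLocalizedModule 𝔭.primeCompl
      (Localization.AtPrime 𝔭) (LocalizedModule.mkLinearMap 𝔭.primeCompl M)).symm)
    (maximalIdeal (Localization.AtPrime 𝔭))
  rwa [Set.mem_preimage, Set.mem_preimage, ← Ideal.under_def,
    Localization.AtPrime.under_maximalIdeal] at h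

theorem exists_smul_mem_smul_top_of_maximalIdeal_smul_top_eq_top
    (h : maximalIdeal (Localization.AtPrime 𝔭) •
      (⊤ : Submodule (Localization.AtPrime 𝔭) (LocalizedModule 𝔭.primeCompl M)) = ⊤) (x : M) :
    ∃ s ∈ 𝔭.primeCompl, s • x ∈ 𝔭 • (⊤ : Submodule R M) := by
  have hloc : (𝔭 • ⊤ : Submodule R M).localized' (Localization.AtPrime 𝔭) 𝔭.primeCompl
      (LocalizedModule.mkLinearMap 𝔭.primeCompl M) = ⊤ := by
    rw [Submodule.localized'_smul, Ideal.localized'_eq_map,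
      Localization.AtPrime.map_eq_maximalIdeal, Submodule.localized'_top, h]
  obtain ⟨m, hm, s, hs⟩ := (Submodule.mem_localized' _ _ _ _ _).mp
    (hloc ▸ Submodule.mem_top : LocalizedModule.mk x 1 ∈ _)
  rw [← IsLocalizedModule.mk_eq_mk', LocalizedModule.mk_eq] at hs
  obtain ⟨u, hu⟩ := hs
  refine ⟨u * s, Submonoid.mul_mem _ u.2 s.2, ?_⟩
  rw [one_smul] at hu
  rw [mul_smul]
  exact hu ▸ Submodule.smul_of_tower_mem _ u hm

end Localization

section Torsion

variable {R A M : Type*} [CommRing R] [CommRing A] [Algebra R A] [AddCommGroup M] [Module R M]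
  [Module A M] [IsScalarTower R A M] (S : Submonoid R)

theorem LocalizedModule.mk_eq_zero_iff_mem_torsion' {x : M} {s : S} :
    LocalizedModule.mk x s = 0 ↔ x ∈ Submodule.torsion' A M S := by
  rw [IsLocalizedModule.mk_eq_mk', IsLocalizedModule.mk'_eq_zero', Submodule.mem_torsion'_iff]

theorem isSMulRegular_quotient_torsion' {s : R} (hs : s ∈ S) :
    IsSMulRegular (M ⧸ Submodule.torsion' A M S) s := by
  refine IsSMulRegular.of_right_eq_zero_of_smul fun x hx ↦ ?_
  obtain ⟨x, rfl⟩ := Submodule.Quotient.mk_surjective _ x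
  rw [← Submodule.Quotient.mk_smul, Submodule.Quotient.mk_eq_zero,
    Submodule.mem_torsion'_iff] at hx
  rw [Submodule.Quotient.mk_eq_zero, Submodule.mem_torsion'_iff]
  obtain ⟨u, hu⟩ := hx
  exact ⟨u * ⟨s, hs⟩, by rw [mul_smul]; exact hu⟩

theorem IsSMulRegular.localizedModule_of_quotient_torsion' {r : R}
    (h : IsSMulRegular (M ⧸ Submodule.torsion' A M S) r) :
    IsSMulRegular (LocalizedModule S M) r := by
  refine IsSMulRegular.of_right_eq_zero_of_smul fun z hz ↦ ?_
  induction z using LocalizedModule.induction_on with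
  | h y t =>
    rw [LocalizedModule.smul'_mk, LocalizedModule.mk_eq_zero_iff_mem_torsion' S (A := A)] at hz
    rw [LocalizedModule.mk_eq_zero_iff_mem_torsion' S (A := A), ← Submodule.Quotient.mk_eq_zero]
    exact h.right_eq_zero_of_smul ((Submodule.Quotient.mk_eq_zero _).mpr hz)

theorem IsAssociatedPrime.localizedModule_of_quotient_torsion' {I : Ideal R}
    (h : IsAssociatedPrime I (M ⧸ Submodule.torsion' A M S)) :
    IsAssociatedPrime I (LocalizedModule S M) := by
  obtain ⟨hI, x, rfl⟩ := h
  obtain ⟨x, rfl⟩ := Submodule.Quotient.mk_surjective _ x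
  refine ⟨hI, LocalizedModule.mk x 1, ?_⟩
  congr 1
  ext r
  rw [Submodule.mem_colon_singleton, Submodule.mem_colon_singleton, Submodule.mem_bot,
    Submodule.mem_bot, LocalizedModule.smul'_mk,
    LocalizedModule.mk_eq_zero_iff_mem_torsion' S (A := A), ← Submodule.Quotient.mk_smul,
    Submodule.Quotient.mk_eq_zero]

end Torsion

section PrimeAvoidance

variable {R A N : Type*} [CommRing R] [CommRing A] [Algebra R A] [AddCommGroup N] [Module R N]
  [Module A N] [IsScalarTower R A N]

theorem mem_associatedPrimes_of_forall_not_isSMulRegular_iff [IsNoetherianRing A]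
    [Module.Finite A N] {𝔭 : Ideal R} (h𝔭 : ∀ r : R, ¬IsSMulRegular N r ↔ r ∈ 𝔭) :
    𝔭 ∈ associatedPrimes R N := by
  classical
  have hfin := associatedPrimes.finite A N
  have hcover : (𝔭 : Set R) ⊆ ⋃ Q ∈ (hfin.toFinset : Set (Ideal A)), Q.comap (algebraMap R A) := by
    intro r hr
    obtain ⟨x, hrx, hx⟩ : ∃ x : N, r • x = 0 ∧ x ≠ 0 := by
      simpa [isSMulRegular_iff_right_eq_zero_of_smul] using (h𝔭 r).mpr hr
    have := (biUnion_associatedPrimes_eq_zero_divisors A N).symm ▸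
      (show algebraMap R A r ∈ {a : A | ∃ x : N, x ≠ 0 ∧ a • x = 0} from
        ⟨x, hx, by rwa [algebraMap_smul]⟩)
    simpa using this
  obtain ⟨Q, hQ, hle⟩ := (Ideal.subset_union_prime ⊥ ⊥ fun Q hQ _ _ ↦
    ((hfin.mem_toFinset.mp hQ).isPrime.comap (algebraMap R A))).mp hcover
  obtain ⟨hQ, x, rfl⟩ := (isAssociatedPrime_iff).mp (hfin.mem_toFinset.mp hQ)
  have hcomap : ((⊥ : Submodule A N).colon {x}).comap (algebraMap R A) =
      (⊥ : Submodule R N).colon {x} := by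
    ext a
    simp only [Ideal.mem_comap, Submodule.mem_colon_singleton, Submodule.mem_bot, algebraMap_smul]
  have hcolon_le : (⊥ : Submodule R N).colon {x} ≤ 𝔭 := fun a ha ↦ by
    rw [Submodule.mem_colon_singleton, Submodule.mem_bot] at ha
    by_contra ha𝔭
    have hx : x = 0 := (not_not.mp (mt (h𝔭 a).mp ha𝔭)).right_eq_zero_of_smul ha
    exact hQ.ne_top (by simp [hx])
  have h𝔭 : 𝔭 = (⊥ : Submodule R N).colon {x} := le_antisymm (hcomap ▸ hle) hcolon_le
  have h𝔭prime : 𝔭.IsPrime := h𝔭 ▸ hcomap ▸ hQ.comap (algebraMap R A)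
  exact ⟨h𝔭prime, x, by rw [← h𝔭, h𝔭prime.radical]⟩

end PrimeAvoidance

theorem exists_pow_sub_mem_and_smul_eq_zero {A M : Type*} [CommRing A] [AddCommGroup M]
    [Module A M] [Module.Finite A M] {J : Ideal A} {c : A}
    (hc : ∀ x : M, c • x ∈ J • (⊤ : Submodule A M)) :
    ∃ n : ℕ, ∃ u : A, u - c ^ n ∈ J ∧ ∀ x : M, u • x = 0 := by
  obtain ⟨P, hmonic, -, hcoeff, hP⟩ :=
    LinearMap.exists_monic_and_natDegree_eq_and_coeff_mem_pow_and_aeval_eq_zero A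
      (algebraMap A (Module.End A M) c) J (by rintro _ ⟨x, rfl⟩; exact hc x)
  refine ⟨P.natDegree, P.eval c, ?_, fun x ↦ ?_⟩
  · rw [Polynomial.eval_eq_sum_range, Finset.sum_range_succ, hmonic.coeff_natDegree, one_mul,
      add_sub_cancel_right]
    refine Ideal.sum_mem _ fun i hi ↦ Ideal.mul_mem_right _ _ (Ideal.pow_le_self ?_ (hcoeff i))
    have := Finset.mem_range.mp hi
    omega
  · rw [Polynomial.aeval_algebraMap_apply, Polynomial.coe_aeval_eq_eval] at hP
    simpa using LinearMap.congr_fun hP x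

theorem exists_mem_forall_smul_mem_of_forall_exists_smul_mem {R A M : Type*} [CommRing R]
    [CommRing A] [Algebra R A] [AddCommGroup M] [Module R M] [Module A M] [IsScalarTower R A M]
    [Module.Finite A M] (S : Submonoid R) (N : Submodule A M) (h : ∀ x : M, ∃ s ∈ S, s • x ∈ N) :
    ∃ s ∈ S, ∀ x : M, s • x ∈ N := by
  classical
  choose s hsS hs using h
  obtain ⟨G, hG⟩ := Module.Finite.fg_top (R := A) (M := M)
  refine ⟨∏ g ∈ G, s g, prod_mem fun g _ ↦ hsS g, fun x ↦ ?_⟩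
  have hspan : Submodule.span A (G : Set M) ≤
      N.comap (LinearMap.lsmul A M (algebraMap R A (∏ g ∈ G, s g))) := by
    refine Submodule.span_le.mpr fun g hg ↦ ?_
    rw [SetLike.mem_coe, Submodule.mem_comap, LinearMap.lsmul_apply, algebraMap_smul,
      ← Finset.prod_erase_mul G s hg, mul_smul]
    exact N.smul_of_tower_mem _ (hs g)
  have hx := hspan (hG ▸ Submodule.mem_top : x ∈ Submodule.span A G)
  rwa [Submodule.mem_comap, LinearMap.lsmul_apply, algebraMap_smul] at hx

section GradedNakayama

open DirectSum

variable {R A M : Type*} [CommRing R] [CommRing A] [Algebra R A] [AddCommGroup M] [Module R M]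
  [Module A M]
  {𝒜 : ℕ → Submodule R A} {ℳ : ℤ → Submodule R M} [Decomposition 𝒜] [Decomposition ℳ]

theorem decompose_zero_smul_of_mem
    (hAM : ∀ (i : ℕ) (j : ℤ), ∀ a ∈ 𝒜 i, ∀ m ∈ ℳ j, a • m ∈ ℳ (i + j))
    (a : A) {j : ℤ} {x : M} (hx : x ∈ ℳ j) :
    (decompose 𝒜 a 0 : A) • x = decompose ℳ (a • x) j := by
  induction a using Decomposition.inductionOn 𝒜 with
  | zero => simp
  | @homogeneous i a =>
    have hmem := hAM i j a a.2 x hx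
    by_cases hi : i = 0
    · subst hi
      rw [decompose_of_mem_same 𝒜 a.2, decompose_of_mem_same ℳ (by simpa using hmem)]
    · rw [decompose_of_mem_ne 𝒜 a.2 hi, zero_smul,
        decompose_of_mem_ne ℳ hmem (by omega)]
  | add a b ha hb => simp [add_smul, ha, hb]

theorem decompose_zero_smul_eq_zero
    (hAM : ∀ (i : ℕ) (j : ℤ), ∀ a ∈ 𝒜 i, ∀ m ∈ ℳ j, a • m ∈ ℳ (i + j))
    {a : A} (ha : ∀ x : M, a • x = 0) (x : M) : (decompose 𝒜 a 0 : A) • x = 0 := by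
  classical
  rw [← sum_support_decompose ℳ x, Finset.smul_sum]
  exact Finset.sum_eq_zero fun j _ ↦ by
    rw [decompose_zero_smul_of_mem hAM a (decompose ℳ x j).2, ha, decompose_zero,
      DirectSum.zero_apply, ZeroMemClass.coe_zero]

theorem exists_algebraMap_eq_decompose_zero_of_mem_map (hA0 : 𝒜 0 = 1) {I : Ideal R} {a : A}
    (ha : a ∈ I.map (algebraMap R A)) : ∃ q ∈ I, algebraMap R A q = decompose 𝒜 a 0 := by
  rw [← Submodule.restrictScalars_mem R, ← Ideal.smul_top_eq_map] at ha
  refine Submodule.smul_induction_on ha (fun p hp b _ ↦ ?_) fun x y ⟨q₁, hq₁, e₁⟩ ⟨q₂, hq₂, e₂⟩ ↦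
    ⟨q₁ + q₂, I.add_mem hq₁ hq₂, by simp [e₁, e₂]⟩
  have hb : (decompose 𝒜 b 0 : A) ∈ (1 : Submodule R A) := hA0 ▸ (decompose 𝒜 b 0).2
  obtain ⟨d, hd⟩ := Submodule.mem_one.mp hb
  refine ⟨p * d, I.mul_mem_right d hp, ?_⟩
  rw [decompose_smul, DFinsupp.smul_apply, Submodule.coe_smul, ← hd, Algebra.smul_def, map_mul]

theorem exists_smul_eq_zero_of_smul_mem_map_smul_top [IsScalarTower R A M] [Module.Finite A M]
    (hA0 : 𝒜 0 = 1)
    (hAM : ∀ (i : ℕ) (j : ℤ), ∀ a ∈ 𝒜 i, ∀ m ∈ ℳ j, a • m ∈ ℳ (i + j))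
    {I : Ideal R} {s : R} (hs : ∀ x : M, s • x ∈ I.map (algebraMap R A) • (⊤ : Submodule A M)) :
    ∃ n : ℕ, ∃ v : R, v - s ^ n ∈ I ∧ ∀ x : M, v • x = 0 := by
  obtain ⟨n, u, hu, hukill⟩ := exists_pow_sub_mem_and_smul_eq_zero (M := M)
    (c := algebraMap R A s) fun x ↦ algebraMap_smul A s x ▸ hs x
  obtain ⟨q, hq, hqu⟩ := exists_algebraMap_eq_decompose_zero_of_mem_map hA0 hu
  have hpow : (decompose 𝒜 (algebraMap R A s ^ n) 0 : A) = algebraMap R A (s ^ n) := by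
    rw [← map_pow]
    exact decompose_of_mem_same 𝒜 (hA0 ▸ Submodule.algebraMap_mem (s ^ n))
  refine ⟨n, q + s ^ n, by simpa using hq, fun x ↦ ?_⟩
  rw [← algebraMap_smul A, map_add, hqu, decompose_sub, DirectSum.sub_apply, Submodule.coe_sub,
    hpow, sub_add_cancel]
  exact decompose_zero_smul_eq_zero hAM hukill x

theorem subsingleton_localizedModule_of_maximalIdeal_smul_top_eq_top [IsScalarTower R A M]
    [Module.Finite A M] (hA0 : 𝒜 0 = 1)
    (hAM : ∀ (i : ℕ) (j : ℤ), ∀ a ∈ 𝒜 i, ∀ m ∈ ℳ j, a • m ∈ ℳ (i + j))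
    (𝔭 : Ideal R) [𝔭.IsPrime]
    (h : maximalIdeal (Localization.AtPrime 𝔭) •
      (⊤ : Submodule (Localization.AtPrime 𝔭) (LocalizedModule 𝔭.primeCompl M)) = ⊤) :
    Subsingleton (LocalizedModule 𝔭.primeCompl M) := by
  set N : Submodule A M := 𝔭.map (algebraMap R A) • ⊤
  have h𝔭 : 𝔭 • (⊤ : Submodule R M) ≤ N.restrictScalars R :=
    Submodule.smul_le.mpr fun r hr x _ ↦ by
      rw [Submodule.restrictScalars_mem, ← algebraMap_smul A r x]
      exact Submodule.smul_mem_smul (Ideal.mem_map_of_mem _ hr) Submodule.mem_top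
  obtain ⟨s, hs, hsM⟩ := exists_mem_forall_smul_mem_of_forall_exists_smul_mem 𝔭.primeCompl N
    fun x ↦ (exists_smul_mem_smul_top_of_maximalIdeal_smul_top_eq_top 𝔭 h x).imp
      fun _ ↦ And.imp_right (@h𝔭 _)
  obtain ⟨n, v, hv, hvM⟩ := exists_smul_eq_zero_of_smul_mem_map_smul_top (𝒜 := 𝒜) hA0 hAM hsM
  have hv𝔭 : v ∈ 𝔭.primeCompl := fun hv' ↦ pow_mem hs n (by simpa using 𝔭.sub_mem hv' hv)
  exact LocalizedModule.subsingleton_iff.mpr fun x ↦ ⟨v, hv𝔭, hvM x⟩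

end GradedNakayama

theorem stmt8_general
    (A₀ A M : Type*) [CommRing A₀] [CommRing A] [Algebra A₀ A]
    [IsNoetherianRing A₀] [IsNoetherianRing A]
    [AddCommGroup M] [Module A₀ M] [Module A M] [IsScalarTower A₀ A M]
    [Module.Finite A M]
    (𝒜 : ℕ → Submodule A₀ A) (ℳ : ℤ → Submodule A₀ M)
    (hA : DirectSum.IsInternal 𝒜) (hA0 : 𝒜 0 = 1)
    (hM : DirectSum.IsInternal ℳ)
    (hAM : ∀ (i : ℕ) (j : ℤ), ∀ a ∈ 𝒜 i, ∀ m ∈ ℳ j, a • m ∈ ℳ (i + j))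
    (𝔭 : Ideal A₀) [𝔭.IsPrime] :
    𝔭 ∈ associatedPrimes A₀ M ↔
      moduleDepth (Localization.AtPrime 𝔭) (LocalizedModule 𝔭.primeCompl M) = 0 := by
  let _ := hA.chooseDecomposition
  let _ := hM.chooseDecomposition
  refine ⟨fun h ↦ moduleDepth_eq_zero_of_maximalIdeal_mem_associatedPrimes
    (Module.associatedPrimes.mem_associatedPrimes_atPrime_of_mem_associatedPrimes h),
    fun hdepth ↦ ?_⟩
  have := nontrivial_of_moduleDepth_eq_zero hdepth
  have hm : maximalIdeal (Localization.AtPrime 𝔭) •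
      (⊤ : Submodule _ (LocalizedModule 𝔭.primeCompl M)) ≠ ⊤ := fun h ↦
    not_subsingleton _ (subsingleton_localizedModule_of_maximalIdeal_smul_top_eq_top hA0 hAM 𝔭 h)
  have hzd (r : A₀) :
      ¬IsSMulRegular (M ⧸ Submodule.torsion' A M 𝔭.primeCompl) r ↔ r ∈ 𝔭 := by
    refine ⟨fun hr ↦ not_not.mp fun hr𝔭 ↦ hr (isSMulRegular_quotient_torsion' _ hr𝔭),
      fun hr hreg ↦ ?_⟩
    refine not_isSMulRegular_of_moduleDepth_eq_zero hdepth hm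
      ((IsLocalization.AtPrime.to_map_mem_maximal_iff _ 𝔭 r).mpr hr) ?_
    exact (isSMulRegular_algebraMap_iff _).mpr (hreg.localizedModule_of_quotient_torsion' _)
  have hquot := mem_associatedPrimes_of_forall_not_isSMulRegular_iff (A := A) hzd
  exact (mem_associatedPrimes_localizedModule_atPrime_iff 𝔭).mp
    (hquot.localizedModule_of_quotient_torsion' _)

theorem stmt8
    (A₀ A M : Type*) [CommRing A₀] [CommRing A] [Algebra A₀ A]
    [IsNoetherianRing A₀] [IsNoetherianRing A]
    [AddCommGroup M] [Module A₀ M] [Module A M] [IsScalarTower A₀ A M]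
    [Module.Finite A M]
    (𝒜 : ℕ → Submodule A₀ A) (ℳ : ℤ → Submodule A₀ M)
    (hinj : Function.Injective (algebraMap A₀ A))
    (hA : DirectSum.IsInternal 𝒜) (hA0 : 𝒜 0 = 1)
    (hAmul : ∀ i j : ℕ, 𝒜 i * 𝒜 j ≤ 𝒜 (i + j))
    (hM : DirectSum.IsInternal ℳ)
    (hAM : ∀ (i : ℕ) (j : ℤ), ∀ a ∈ 𝒜 i, ∀ m ∈ ℳ j, a • m ∈ ℳ (i + j))
    (𝔭 : Ideal A₀) [𝔭.IsPrime] :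
    𝔭 ∈ associatedPrimes A₀ M ↔
      moduleDepth (Localization.AtPrime 𝔭) (LocalizedModule 𝔭.primeCompl M) = 0 :=
  stmt8_general A₀ A M 𝒜 ℳ hA hA0 hM hAM 𝔭
end
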